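/- arXiv:2605.09215 — 9 statements merged into one kernel-verified Lean document; each statement's English description precedes it below -/
import Mathlib

section
/- For every n ≥ 2 and every ε ∈ {0,1}, every no-three-in-line set S ⊆ C_ε(n) satisfies |S| ≤ 2n − 2. -/
/-- The `n × n` integer grid `G_n = {0,…,n−1} × {0,…,n−1} ⊆ ℤ²`. -/
noncomputable def grid (n : ℕ) : Finset (ℤ × ℤ) :=
  Finset.Icc (0 : ℤ) ((n : ℤ) - 1) ×ˢ Finset.Icc (0 : ℤ) ((n : ℤ) - 1)

/-- The parity (checkerboard) class `C_ε(n) = {(x,y) ∈ G_n : x + y ≡ ε (mod 2)}`. -/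
noncomputable def gridClass (n : ℕ) (ε : ℕ) : Finset (ℤ × ℤ) :=
  (grid n).filter (fun P => (P.1 + P.2) % 2 = (ε : ℤ))

/-- Three points of `ℤ²` are collinear. -/
def Collinear3 (P Q R : ℤ × ℤ) : Prop :=
  (Q.1 - P.1) * (R.2 - P.2) = (R.1 - P.1) * (Q.2 - P.2)

/-- A finite set is no-three-in-line if no three distinct points of it are collinear. -/
def NTIL (S : Finset (ℤ × ℤ)) : Prop :=
  ∀ P ∈ S, ∀ Q ∈ S, ∀ R ∈ S, P ≠ Q → P ≠ R → Q ≠ R → ¬ Collinear3 P Q R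

/-!
A point `(x, y)` of `C_ε(n)` lies on an antidiagonal `x + y = c` with `0 ≤ c ≤ 2n - 2` and
`c ≡ ε (mod 2)`, and a no-three-in-line set meets each antidiagonal in at most two points.
For `ε = 1` there are `n - 1` such antidiagonals. For `ε = 0` there are `n`, but the extreme
ones `c = 0` and `c = 2n - 2` are the single corners `(0, 0)` and `(n - 1, n - 1)`, so again
at most `2 + 2 (n - 2)` points.
-/

open Finset

theorem collinear3_of_add_eq {P Q R : ℤ × ℤ} {c : ℤ} (hP : P.1 + P.2 = c) (hQ : Q.1 + Q.2 = c)
    (hR : R.1 + R.2 = c) : Collinear3 P Q R := by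
  unfold Collinear3
  linear_combination (R.2 - P.2) * hQ - (Q.2 - P.2) * hR + (Q.2 - R.2) * hP

theorem NTIL.mono {S T : Finset (ℤ × ℤ)} (hS : NTIL S) (hTS : T ⊆ S) : NTIL T :=
  fun P hP Q hQ R hR => hS P (hTS hP) Q (hTS hQ) R (hTS hR)

theorem NTIL.card_filter_add_eq_le_two {S : Finset (ℤ × ℤ)} (hS : NTIL S) (c : ℤ) :
    #(S.filter fun P => P.1 + P.2 = c) ≤ 2 := by
  by_contra! h
  obtain ⟨P, hP, Q, hQ, R, hR, hPQ, hPR, hQR⟩ := two_lt_card.mp h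
  simp only [mem_filter] at hP hQ hR
  exact hS P hP.1 Q hQ.1 R hR.1 hPQ hPR hQR (collinear3_of_add_eq hP.2 hQ.2 hR.2)

theorem NTIL.card_le_two_mul_of_add_mem {S : Finset (ℤ × ℤ)} (hS : NTIL S) {t : Finset ℤ}
    (ht : ∀ P ∈ S, P.1 + P.2 ∈ t) : #S ≤ 2 * #t :=
  card_le_mul_card_image_of_maps_to ht 2 fun c _ => hS.card_filter_add_eq_le_two c

theorem mem_gridClass {n ε : ℕ} {P : ℤ × ℤ} :
    P ∈ gridClass n ε ↔ (0 ≤ P.1 ∧ P.1 ≤ n - 1) ∧ (0 ≤ P.2 ∧ P.2 ≤ n - 1) ∧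
      (P.1 + P.2) % 2 = ε := by
  simp only [gridClass, grid, mem_filter, mem_product, mem_Icc, and_assoc]

theorem NTIL.card_le_two_mul_of_add_mem_image {S : Finset (ℤ × ℤ)} (hS : NTIL S) {f : ℕ → ℤ}
    {m : ℕ} (hf : ∀ P ∈ S, ∃ k < m, f k = P.1 + P.2) : #S ≤ 2 * m := by
  refine (hS.card_le_two_mul_of_add_mem (t := (range m).image f) ?_).trans
    (Nat.mul_le_mul_left 2 (card_image_le.trans (card_range m).le))
  simpa only [mem_image, mem_range] using hf

theorem NTIL.card_le_of_subset_gridClass_one {n : ℕ} {S : Finset (ℤ × ℤ)} (hS : NTIL S)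
    (hSC : S ⊆ gridClass n 1) : #S ≤ 2 * (n - 1) := by
  refine hS.card_le_two_mul_of_add_mem_image (f := fun k => 2 * k + 1) fun P hP => ?_
  have := mem_gridClass.mp (hSC hP)
  exact ⟨((P.1 + P.2) / 2).toNat, by omega, by omega⟩

theorem NTIL.card_le_of_subset_gridClass_zero {n : ℕ} (hn : 2 ≤ n) {S : Finset (ℤ × ℤ)}
    (hS : NTIL S) (hSC : S ⊆ gridClass n 0) : #S ≤ 2 * (n - 1) := by
  let IsCorner : ℤ × ℤ → Prop := fun P => P.1 + P.2 = 0 ∨ P.1 + P.2 = 2 * n - 2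
  have h_corners : #(S.filter IsCorner) ≤ 2 := by
    have : S.filter IsCorner ⊆ {(0, 0), ((n : ℤ) - 1, (n : ℤ) - 1)} := by
      intro P hP
      obtain ⟨hPS, hP⟩ := mem_filter.mp hP
      have := mem_gridClass.mp (hSC hPS)
      simp only [mem_insert, mem_singleton, Prod.ext_iff]
      omega
    exact (card_le_card this).trans card_le_two
  have h_interior : #(S.filter fun P => ¬IsCorner P) ≤ 2 * (n - 2) := by
    refine (hS.mono (filter_subset _ _)).card_le_two_mul_of_add_mem_image
      (f := fun k => 2 * k + 2) fun P hP => ?_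
    obtain ⟨hPS, hP⟩ := mem_filter.mp hP
    simp only [IsCorner] at hP
    have := mem_gridClass.mp (hSC hPS)
    exact ⟨((P.1 + P.2) / 2 - 1).toNat, by omega, by omega⟩
  have := card_filter_add_card_filter_not (s := S) IsCorner
  omega

/-- For every `n ≥ 2` and `ε ∈ {0,1}`, every no-three-in-line set `S ⊆ C_ε(n)`
satisfies `|S| ≤ 2n − 2`. -/
theorem ntil_mono_le_two_n_sub_two (n : ℕ) (hn : 2 ≤ n) (ε : ℕ) (hε : ε ≤ 1)
    (S : Finset (ℤ × ℤ)) (hS : S ⊆ gridClass n ε) (hNTIL : NTIL S) :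
    S.card ≤ 2 * n - 2 := by
  rw [show 2 * n - 2 = 2 * (n - 1) by omega]
  interval_cases ε
  · exact hNTIL.card_le_of_subset_gridClass_zero hn hS
  · exact hNTIL.card_le_of_subset_gridClass_one hS
end

section
/- Fix n ≥ 2 and ε ∈ {0,1}. Suppose nonnegative real weights h_y (0 ≤ y ≤ n−1), v_x (0 ≤ x ≤ n−1), λ⁺_c (−(n−1) ≤ c ≤ n−1) and λ⁻_c (0 ≤ c ≤ 2n−2) satisfy the covering condition h_y + v_x + λ⁺_{x−y} + λ⁻_{x+y} ≥ 1 for every point (x,y) ∈ C_ε(n). Then every no-three-in-line set S ⊆ C_ε(n) satisfies |S| ≤ 2( Σ_{y=0}^{n−1} h_y + Σ_{x=0}^{n−1} v_x + Σ_{c=−(n−1)}^{n−1} λ⁺_c + Σ_{c=0}^{2n−2} λ⁻_c ). -/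
open Finset

theorem Finset.sum_comp_le_mul_sum {α β R : Type*} [DecidableEq β] [Semiring R] [PartialOrder R]
    [IsOrderedRing R] {s : Finset α} {t : Finset β} {g : α → β} {w : β → R} (k : ℕ)
    (hw : ∀ b ∈ t, 0 ≤ w b) (hg : ∀ a ∈ s, g a ∈ t) (hk : ∀ b, #{a ∈ s | g a = b} ≤ k) :
    ∑ a ∈ s, w (g a) ≤ k * ∑ b ∈ t, w b := by
  have himage : s.image g ⊆ t := image_subset_iff.2 hg
  rw [sum_comp, mul_sum]
  calc ∑ b ∈ s.image g, #{a ∈ s | g a = b} • w b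
      ≤ ∑ b ∈ s.image g, (k : R) * w b := sum_le_sum fun b hb => by
        rw [nsmul_eq_mul]
        exact mul_le_mul_of_nonneg_right (Nat.mono_cast (hk b)) (hw b (himage hb))
    _ ≤ ∑ b ∈ t, (k : R) * w b :=
        sum_le_sum_of_subset_of_nonneg himage fun b hb _ => mul_nonneg k.cast_nonneg (hw b hb)

theorem collinear3_of_linear_eq {a b : ℤ} (hab : a ≠ 0 ∨ b ≠ 0) {P Q R : ℤ × ℤ}
    (hQ : a * Q.1 + b * Q.2 = a * P.1 + b * P.2) (hR : a * R.1 + b * R.2 = a * P.1 + b * P.2) :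
    Collinear3 P Q R := by
  unfold Collinear3
  rw [← sub_eq_zero]
  rcases hab with ha | hb
  · refine (mul_eq_zero.1 ?_).resolve_left ha
    linear_combination (R.2 - P.2) * hQ - (Q.2 - P.2) * hR
  · refine (mul_eq_zero.1 ?_).resolve_left hb
    linear_combination (Q.1 - P.1) * hR - (R.1 - P.1) * hQ

namespace NTIL

variable {S : Finset (ℤ × ℤ)} {f : ℤ × ℤ → ℤ} {a b : ℤ}

theorem card_filter_le_two (hS : NTIL S) (hab : a ≠ 0 ∨ b ≠ 0)
    (hf : ∀ P, f P = a * P.1 + b * P.2) (c : ℤ) : #{P ∈ S | f P = c} ≤ 2 := by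
  by_contra! hlt
  obtain ⟨P, hP, Q, hQ, R, hR, hPQ, hPR, hQR⟩ := two_lt_card.1 hlt
  simp only [mem_filter] at hP hQ hR
  refine hS P hP.1 Q hQ.1 R hR.1 hPQ hPR hQR (collinear3_of_linear_eq hab ?_ ?_) <;>
    simp only [← hf, hP.2, hQ.2, hR.2]

theorem sum_comp_le_two_mul_sum (hS : NTIL S) (hab : a ≠ 0 ∨ b ≠ 0)
    (hf : ∀ P, f P = a * P.1 + b * P.2) {I : Finset ℤ} {w : ℤ → ℝ} (hw : ∀ c ∈ I, 0 ≤ w c)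
    (hI : ∀ P ∈ S, f P ∈ I) : ∑ P ∈ S, w (f P) ≤ 2 * ∑ c ∈ I, w c := by
  exact_mod_cast sum_comp_le_mul_sum 2 hw hI (hS.card_filter_le_two hab hf)

end NTIL

theorem mem_Icc_of_mem_gridClass {n ε : ℕ} {P : ℤ × ℤ} (hP : P ∈ gridClass n ε) :
    P.1 ∈ Icc 0 ((n : ℤ) - 1) ∧ P.2 ∈ Icc 0 ((n : ℤ) - 1) :=
  mem_product.1 (mem_filter.1 hP).1

theorem dual_certificate_bound_general (n : ℕ) (ε : ℕ)
    (h v lp lm : ℤ → ℝ)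
    (hh : ∀ y ∈ Finset.Icc (0 : ℤ) ((n : ℤ) - 1), 0 ≤ h y)
    (hv : ∀ x ∈ Finset.Icc (0 : ℤ) ((n : ℤ) - 1), 0 ≤ v x)
    (hlp : ∀ c ∈ Finset.Icc (-((n : ℤ) - 1)) ((n : ℤ) - 1), 0 ≤ lp c)
    (hlm : ∀ c ∈ Finset.Icc (0 : ℤ) (2 * (n : ℤ) - 2), 0 ≤ lm c)
    (hcov : ∀ P ∈ gridClass n ε, 1 ≤ h P.2 + v P.1 + lp (P.1 - P.2) + lm (P.1 + P.2))
    (S : Finset (ℤ × ℤ)) (hS : S ⊆ gridClass n ε) (hNTIL : NTIL S) :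
    (S.card : ℝ) ≤ 2 * ((∑ y ∈ Finset.Icc (0 : ℤ) ((n : ℤ) - 1), h y)
      + (∑ x ∈ Finset.Icc (0 : ℤ) ((n : ℤ) - 1), v x)
      + (∑ c ∈ Finset.Icc (-((n : ℤ) - 1)) ((n : ℤ) - 1), lp c)
      + (∑ c ∈ Finset.Icc (0 : ℤ) (2 * (n : ℤ) - 2), lm c)) := by
  have hgrid (P) (hP : P ∈ S) := mem_Icc_of_mem_gridClass (hS hP)
  have hcharge : (S.card : ℝ) ≤ ∑ P ∈ S, (h P.2 + v P.1 + lp (P.1 - P.2) + lm (P.1 + P.2)) := by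
    simpa using card_nsmul_le_sum S _ 1 fun P hP => hcov P (hS hP)
  have hrows := hNTIL.sum_comp_le_two_mul_sum (a := 0) (b := 1) (by simp)
    (f := Prod.snd) (fun _ => by ring) hh fun P hP => (hgrid P hP).2
  have hcols := hNTIL.sum_comp_le_two_mul_sum (a := 1) (b := 0) (by simp)
    (f := Prod.fst) (fun _ => by ring) hv fun P hP => (hgrid P hP).1
  have hdiag := hNTIL.sum_comp_le_two_mul_sum (a := 1) (b := -1) (by simp)
    (f := fun P => P.1 - P.2) (fun _ => by ring) hlp fun P hP => by
      have := hgrid P hP; simp only [mem_Icc] at this ⊢; omega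
  have hanti := hNTIL.sum_comp_le_two_mul_sum (a := 1) (b := 1) (by simp)
    (f := fun P => P.1 + P.2) (fun _ => by ring) hlm fun P hP => by
      have := hgrid P hP; simp only [mem_Icc] at this ⊢; omega
  simp only [sum_add_distrib] at hcharge
  linarith

/-- Any feasible nonnegative dual weighting of rows, columns and slope-`±1` diagonals
covering every point of the parity class `C_ε(n)` gives an upper bound for every
no-three-in-line set contained in `C_ε(n)`. -/
theorem dual_certificate_bound (n : ℕ) (hn : 2 ≤ n) (ε : ℕ) (hε : ε ≤ 1)
    (h v lp lm : ℤ → ℝ)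
    (hh : ∀ y ∈ Finset.Icc (0 : ℤ) ((n : ℤ) - 1), 0 ≤ h y)
    (hv : ∀ x ∈ Finset.Icc (0 : ℤ) ((n : ℤ) - 1), 0 ≤ v x)
    (hlp : ∀ c ∈ Finset.Icc (-((n : ℤ) - 1)) ((n : ℤ) - 1), 0 ≤ lp c)
    (hlm : ∀ c ∈ Finset.Icc (0 : ℤ) (2 * (n : ℤ) - 2), 0 ≤ lm c)
    (hcov : ∀ P ∈ gridClass n ε, 1 ≤ h P.2 + v P.1 + lp (P.1 - P.2) + lm (P.1 + P.2))
    (S : Finset (ℤ × ℤ)) (hS : S ⊆ gridClass n ε) (hNTIL : NTIL S) :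
    (S.card : ℝ) ≤ 2 * ((∑ y ∈ Finset.Icc (0 : ℤ) ((n : ℤ) - 1), h y)
      + (∑ x ∈ Finset.Icc (0 : ℤ) ((n : ℤ) - 1), v x)
      + (∑ c ∈ Finset.Icc (-((n : ℤ) - 1)) ((n : ℤ) - 1), lp c)
      + (∑ c ∈ Finset.Icc (0 : ℤ) (2 * (n : ℤ) - 2), lm c)) :=
  dual_certificate_bound_general n ε h v lp lm hh hv hlp hlm hcov S hS hNTIL
end

section
/- Let m ≥ 1 and n = 2m+1, and let C_1(n) be the thin parity class (the class of points with x + y odd). Suppose nonnegative reals a_0,…,a_{m−1} and b_0,…,b_m satisfy a_u + a_{m−v−1} + b_{u+v+1} + b_{u−v} ≥ 1 for all integers u, v with 0 ≤ v ≤ u and u + v ≤ m−1. Then every no-three-in-line set S ⊆ C_1(n) satisfies |S| ≤ 8·Σ_{i=0}^{m−1} a_i + 8·Σ_{i=0}^{m−1} b_i + 4 b_m. -/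
/-!
Index the rows and columns of the grid `[0, 2m]²` by their distance `j ≤ m` to the border, and
the odd anti-diagonals and diagonals by `k < m`, so that each index of `k` or of `j < m` names a
pair of parallel lines, symmetric about the centre. For a thin point with classes `k₁, k₂, j₁, j₂`,
the constraint at `u = min k₁ k₂`, `v = m - 1 - max k₁ k₂` has exactly these four indices, so the
weights of its four classes sum to at least `1`. Summing over `S` and regrouping by class, a pair
of lines holds at most `4` points of `S` and the middle row or column at most `2`.
-/

open Finset

lemma mem_gridClass_iff {n ε : ℕ} {P : ℤ × ℤ} :
    P ∈ gridClass n ε ↔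
      (0 ≤ P.1 ∧ P.1 < n ∧ 0 ≤ P.2 ∧ P.2 < n) ∧ (P.1 + P.2) % 2 = ε := by
  simp only [gridClass, grid, mem_filter, mem_product, mem_Icc]
  omega

def IsNonconstAffine (ℓ : ℤ × ℤ → ℤ) : Prop :=
  ∃ A B C : ℤ, (A ≠ 0 ∨ B ≠ 0) ∧ ∀ P, ℓ P = A * P.1 + B * P.2 + C

def edgeDist (N t : ℤ) : ℕ := (min t (N - t)).toNat

namespace NTIL

variable {S : Finset (ℤ × ℤ)} {ℓ : ℤ × ℤ → ℤ}

theorem mono_s4 {T : Finset (ℤ × ℤ)} (hS : NTIL S) (hT : T ⊆ S) : NTIL T :=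
  fun P hP Q hQ R hR => hS P (hT hP) Q (hT hQ) R (hT hR)

theorem card_filter_eq_le_two (hS : NTIL S) (hℓ : IsNonconstAffine ℓ) (c : ℤ) :
    #{P ∈ S | ℓ P = c} ≤ 2 := by
  obtain ⟨A, B, C, hAB, hℓ⟩ := hℓ
  by_contra! h
  obtain ⟨P, hP, Q, hQ, R, hR, hPQ, hPR, hQR⟩ := two_lt_card.1 h
  simp only [mem_filter, hℓ] at hP hQ hR
  refine hS P hP.1 Q hQ.1 R hR.1 hPQ hPR hQR ?_
  unfold Collinear3
  rcases hAB with hA | hB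
  · refine mul_left_cancel₀ hA ?_
    linear_combination (R.2 - P.2) * (hQ.2 - hP.2) - (Q.2 - P.2) * (hR.2 - hP.2)
  · refine mul_left_cancel₀ hB ?_
    linear_combination (Q.1 - P.1) * (hR.2 - hP.2) - (R.1 - P.1) * (hQ.2 - hP.2)

theorem sum_comp_le_of_mem_two_lines {f : ℤ × ℤ → ℕ} {M : ℕ} {c c' : ℕ → ℤ} {w : ℕ → ℝ}
    (hS : NTIL S) (hℓ : IsNonconstAffine ℓ) (hw : ∀ i < M, 0 ≤ w i)
    (hf : ∀ P ∈ S, f P < M ∧ (ℓ P = c (f P) ∨ ℓ P = c' (f P))) :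
    ∑ P ∈ S, w (f P) ≤ 4 * ∑ i ∈ range M, w i := by
  rw [← sum_fiberwise_of_maps_to (t := range M) (fun P hP => mem_range.2 (hf P hP).1), mul_sum]
  refine sum_le_sum fun i hi => ?_
  have hfiber : #{P ∈ S | f P = i} ≤ 4 :=
    calc #{P ∈ S | f P = i}
        ≤ #({P ∈ S | ℓ P = c i} ∪ {P ∈ S | ℓ P = c' i}) := by
          refine card_le_card fun P hP => ?_
          obtain ⟨hPS, rfl⟩ := mem_filter.1 hP
          simpa [hPS] using (hf P hPS).2
      _ ≤ 2 + 2 := (card_union_le _ _).trans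
          (add_le_add (hS.card_filter_eq_le_two hℓ _) (hS.card_filter_eq_le_two hℓ _))
  rw [sum_congr rfl fun P hP => by rw [(mem_filter.1 hP).2], sum_const, nsmul_eq_mul]
  exact mul_le_mul_of_nonneg_right (by exact_mod_cast hfiber) (hw i (mem_range.1 hi))

theorem sum_edgeDist_le {M : ℕ} {w : ℕ → ℝ} (hS : NTIL S) (hℓ : IsNonconstAffine ℓ)
    (hw : ∀ i ≤ M, 0 ≤ w i) (hrange : ∀ P ∈ S, 0 ≤ ℓ P ∧ ℓ P ≤ 2 * M) :
    ∑ P ∈ S, w (edgeDist (2 * M) (ℓ P)) ≤ 4 * ∑ i ∈ range M, w i + 2 * w M := by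
  rw [← sum_filter_not_add_sum_filter S (fun P => ℓ P = M)]
  gcongr
  · refine (hS.mono_s4 (filter_subset _ _)).sum_comp_le_of_mem_two_lines hℓ (c := fun i => i)
      (c' := fun i => 2 * M - i) (fun i hi => hw i hi.le) fun P hP => ?_
    have := hrange P (mem_filter.1 hP).1
    have := (mem_filter.1 hP).2
    unfold edgeDist
    omega
  · have hmid : edgeDist (2 * M) M = M := by unfold edgeDist; omega
    rw [sum_congr rfl fun P hP => by rw [(mem_filter.1 hP).2, hmid], sum_const, nsmul_eq_mul]
    gcongr
    · exact hw M le_rfl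
    · exact_mod_cast hS.card_filter_eq_le_two hℓ M

theorem sum_edgeDist_div_two_le {M : ℕ} {w : ℕ → ℝ} (hS : NTIL S)
    (hℓ : IsNonconstAffine ℓ) (hw : ∀ i < M, 0 ≤ w i)
    (hrange : ∀ P ∈ S, 0 ≤ ℓ P ∧ ℓ P ≤ 4 * M ∧ ℓ P % 2 = 1) :
    ∑ P ∈ S, w (edgeDist (4 * M) (ℓ P) / 2) ≤ 4 * ∑ i ∈ range M, w i :=
  hS.sum_comp_le_of_mem_two_lines hℓ (c := fun i => 2 * i + 1)
    (c' := fun i => 4 * M - 2 * i - 1) hw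
    fun P hP => by have := hrange P hP; unfold edgeDist; omega

end NTIL

theorem one_le_dual_weight_of_thin {m : ℕ} {a b : ℕ → ℝ}
    (hcon : ∀ u v : ℕ, v ≤ u → u + v ≤ m - 1 →
      1 ≤ a u + a (m - v - 1) + b (u + v + 1) + b (u - v))
    {x y : ℤ} (hx : 0 ≤ x ∧ x ≤ 2 * m) (hy : 0 ≤ y ∧ y ≤ 2 * m) (hxy : (x + y) % 2 = 1) :
    1 ≤ a (edgeDist (4 * m) (x + y) / 2) + a (edgeDist (4 * m) (x - y + 2 * m) / 2)
      + b (edgeDist (2 * m) x) + b (edgeDist (2 * m) y) := by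
  set k₁ := edgeDist (4 * m) (x + y) / 2
  set k₂ := edgeDist (4 * m) (x - y + 2 * m) / 2
  set j₁ := edgeDist (2 * m) x
  set j₂ := edgeDist (2 * m) y
  obtain ⟨u, v, hvu, huv, hk, hj⟩ : ∃ u v : ℕ, v ≤ u ∧ u + v ≤ m - 1 ∧
      (u = k₁ ∧ m - v - 1 = k₂ ∨ u = k₂ ∧ m - v - 1 = k₁) ∧
      (u + v + 1 = j₁ ∧ u - v = j₂ ∨ u + v + 1 = j₂ ∧ u - v = j₁) :=
    ⟨min k₁ k₂, m - 1 - max k₁ k₂, by simp only [k₁, k₂, j₁, j₂, edgeDist]; omega⟩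
  have := hcon u v hvu huv
  rcases hk with ⟨h₁, h₂⟩ | ⟨h₁, h₂⟩ <;> rcases hj with ⟨h₃, h₄⟩ | ⟨h₃, h₄⟩ <;>
    rw [← h₁, ← h₂, ← h₃, ← h₄] <;> linarith

theorem odd_thin_reduced_dual_bound_general (m : ℕ) (a b : ℕ → ℝ)
    (ha : ∀ i ≤ m - 1, 0 ≤ a i) (hb : ∀ i ≤ m, 0 ≤ b i)
    (hcon : ∀ u v : ℕ, v ≤ u → u + v ≤ m - 1 →
      1 ≤ a u + a (m - v - 1) + b (u + v + 1) + b (u - v))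
    (S : Finset (ℤ × ℤ)) (hS : S ⊆ gridClass (2 * m + 1) 1) (hNTIL : NTIL S) :
    (S.card : ℝ) ≤ 8 * (∑ i ∈ Finset.range m, a i) + 8 * (∑ i ∈ Finset.range m, b i)
      + 4 * b m := by
  have hthin (P) (hP : P ∈ S) := mem_gridClass_iff.1 (hS hP)
  have ha' (i) (hi : i < m) : 0 ≤ a i := ha i (by omega)
  have hcover : (#S : ℝ) ≤ ∑ P ∈ S, (a (edgeDist (4 * m) (P.1 + P.2) / 2)
      + a (edgeDist (4 * m) (P.1 - P.2 + 2 * m) / 2)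
      + b (edgeDist (2 * m) P.1) + b (edgeDist (2 * m) P.2)) := by
    rw [card_eq_sum_ones, Nat.cast_sum, Nat.cast_one]
    refine sum_le_sum fun P hP => ?_
    have := hthin P hP
    exact one_le_dual_weight_of_thin hcon (by omega) (by omega) (by omega)
  have hanti := hNTIL.sum_edgeDist_div_two_le (ℓ := fun P => P.1 + P.2)
    ⟨1, 1, 0, by simp, fun P => by ring⟩ ha' fun P hP => by have := hthin P hP; omega
  have hdiag := hNTIL.sum_edgeDist_div_two_le (ℓ := fun P => P.1 - P.2 + 2 * m)
    ⟨1, -1, 2 * m, by simp, fun P => by ring⟩ ha' fun P hP => by have := hthin P hP; omega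
  have hrow := hNTIL.sum_edgeDist_le (ℓ := Prod.fst)
    ⟨1, 0, 0, by simp, fun P => by ring⟩ hb fun P hP => by have := hthin P hP; omega
  have hcol := hNTIL.sum_edgeDist_le (ℓ := Prod.snd)
    ⟨0, 1, 0, by simp, fun P => by ring⟩ hb fun P hP => by have := hthin P hP; omega
  simp only [sum_add_distrib] at hcover
  linarith

/-- Odd side length `n = 2m+1`, thin class: a feasible symmetry-reduced dual weighting
bounds every no-three-in-line subset of the thin parity class `C_1(2m+1)`. -/
theorem odd_thin_reduced_dual_bound (m : ℕ) (hm : 1 ≤ m) (a b : ℕ → ℝ)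
    (ha : ∀ i ≤ m - 1, 0 ≤ a i) (hb : ∀ i ≤ m, 0 ≤ b i)
    (hcon : ∀ u v : ℕ, v ≤ u → u + v ≤ m - 1 →
      1 ≤ a u + a (m - v - 1) + b (u + v + 1) + b (u - v))
    (S : Finset (ℤ × ℤ)) (hS : S ⊆ gridClass (2 * m + 1) 1) (hNTIL : NTIL S) :
    (S.card : ℝ) ≤ 8 * (∑ i ∈ Finset.range m, a i) + 8 * (∑ i ∈ Finset.range m, b i)
      + 4 * b m :=
  odd_thin_reduced_dual_bound_general m a b ha hb hcon S hS hNTIL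
end

section
/- For every n ≥ 1, the infimum of 2( Σ_{y=0}^{n−1} h_y + Σ_{x=0}^{n−1} v_x + Σ_{c=−(n−1)}^{n−1} λ⁺_c + Σ_{c=0}^{2n−2} λ⁻_c ), taken over all nonnegative real weights h, v, λ⁺, λ⁻ satisfying h_y + v_x + λ⁺_{x−y} + λ⁻_{x+y} ≥ 1 for every point (x,y) of the full grid G_n, equals 2n. (The upper bound is attained by h_y = v_x = 1/2 and λ⁺ = λ⁻ = 0, and the lower bound follows by pairing any feasible weighting with the constant fractional assignment z_{x,y} = 2/n.) -/
/-!
Summing the covering inequality over all `n²` grid points gives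
`n² ≤ n·(∑ h + ∑ v) + ∑_{x,y} λ⁺_{x−y} + ∑_{x,y} λ⁻_{x+y}`; since each diagonal meets the
grid in at most `n` points, the diagonal terms are at most `n·∑ λ⁺` and `n·∑ λ⁻`, so the
total weight is at least `n`. The weighting `h = v = 1/2`, `λ⁺ = λ⁻ = 0` attains it.
-/

open Finset

theorem sum_Icc_comp_add_le_sum_Icc {M : Type*} [AddCommMonoid M] [PartialOrder M]
    [IsOrderedAddMonoid M] {f : ℤ → M} {a b c d t : ℤ} (hf : ∀ x ∈ Icc c d, 0 ≤ f x)
    (hc : c ≤ a + t) (hd : b + t ≤ d) :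
    ∑ x ∈ Icc a b, f (x + t) ≤ ∑ x ∈ Icc c d, f x := by
  calc ∑ x ∈ Icc a b, f (x + t) = ∑ x ∈ Icc (a + t) (b + t), f x := by
        rw [← map_add_right_Icc, sum_map]; rfl
    _ ≤ ∑ x ∈ Icc c d, f x :=
      sum_le_sum_of_subset_of_nonneg (Icc_subset_Icc hc hd) fun x hx _ => hf x hx

theorem Int.card_Icc_zero_natCast_sub_one (n : ℕ) : #(Icc (0 : ℤ) ((n : ℤ) - 1)) = n := by
  rw [Int.card_Icc]; omega

section GridCover

variable {n : ℕ} {h v lp lm : ℤ → ℝ}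

theorem sum_row_cover_le
    (hlp : ∀ c ∈ Icc (-((n : ℤ) - 1)) ((n : ℤ) - 1), 0 ≤ lp c)
    (hlm : ∀ c ∈ Icc (0 : ℤ) (2 * (n : ℤ) - 2), 0 ≤ lm c)
    {y : ℤ} (hy : y ∈ Icc (0 : ℤ) ((n : ℤ) - 1)) :
    ∑ x ∈ Icc (0 : ℤ) ((n : ℤ) - 1), (h y + v x + lp (x - y) + lm (x + y)) ≤
      n * h y + ∑ x ∈ Icc (0 : ℤ) ((n : ℤ) - 1), v x
        + ∑ c ∈ Icc (-((n : ℤ) - 1)) ((n : ℤ) - 1), lp c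
        + ∑ c ∈ Icc (0 : ℤ) (2 * (n : ℤ) - 2), lm c := by
  rw [mem_Icc] at hy
  have hdiag : ∑ x ∈ Icc (0 : ℤ) ((n : ℤ) - 1), lp (x - y) ≤
      ∑ c ∈ Icc (-((n : ℤ) - 1)) ((n : ℤ) - 1), lp c := by
    simp_rw [sub_eq_add_neg]
    exact sum_Icc_comp_add_le_sum_Icc hlp (by omega) (by omega)
  have hantidiag : ∑ x ∈ Icc (0 : ℤ) ((n : ℤ) - 1), lm (x + y) ≤
      ∑ c ∈ Icc (0 : ℤ) (2 * (n : ℤ) - 2), lm c :=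
    sum_Icc_comp_add_le_sum_Icc hlm (by omega) (by omega)
  simp only [sum_add_distrib, sum_const, Int.card_Icc_zero_natCast_sub_one, nsmul_eq_mul]
  linarith

theorem natCast_le_sum_weights_of_covers_grid (hn : 1 ≤ n)
    (hlp : ∀ c ∈ Icc (-((n : ℤ) - 1)) ((n : ℤ) - 1), 0 ≤ lp c)
    (hlm : ∀ c ∈ Icc (0 : ℤ) (2 * (n : ℤ) - 2), 0 ≤ lm c)
    (hcov : ∀ x y : ℤ, 0 ≤ x → x ≤ (n : ℤ) - 1 → 0 ≤ y → y ≤ (n : ℤ) - 1 →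
      1 ≤ h y + v x + lp (x - y) + lm (x + y)) :
    (n : ℝ) ≤ ∑ y ∈ Icc (0 : ℤ) ((n : ℤ) - 1), h y + ∑ x ∈ Icc (0 : ℤ) ((n : ℤ) - 1), v x
        + ∑ c ∈ Icc (-((n : ℤ) - 1)) ((n : ℤ) - 1), lp c
        + ∑ c ∈ Icc (0 : ℤ) (2 * (n : ℤ) - 2), lm c := by
  set I := Icc (0 : ℤ) ((n : ℤ) - 1) with hI
  have hcard : #I = n := Int.card_Icc_zero_natCast_sub_one n
  refine le_of_mul_le_mul_left ?_ (by exact_mod_cast hn : (0 : ℝ) < n)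
  calc (n : ℝ) * n = ∑ y ∈ I, ∑ x ∈ I, (1 : ℝ) := by simp [hcard]
    _ ≤ ∑ y ∈ I, ∑ x ∈ I, (h y + v x + lp (x - y) + lm (x + y)) := by
      refine sum_le_sum fun y hy => sum_le_sum fun x hx => ?_
      rw [hI, mem_Icc] at hx hy
      exact hcov x y hx.1 hx.2 hy.1 hy.2
    _ ≤ ∑ y ∈ I, (n * h y + ∑ x ∈ I, v x
          + ∑ c ∈ Icc (-((n : ℤ) - 1)) ((n : ℤ) - 1), lp c
          + ∑ c ∈ Icc (0 : ℤ) (2 * (n : ℤ) - 2), lm c) :=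
      sum_le_sum fun y hy => sum_row_cover_le hlp hlm hy
    _ = _ := by
      simp only [sum_add_distrib, ← mul_sum, sum_const, hcard, nsmul_eq_mul]
      ring

end GridCover

/-- For the full `n × n` grid, the four-direction dual LP (rows, columns and the two
diagonal families of slopes `±1`, with the covering condition
`h_y + v_x + λ⁺_{x−y} + λ⁻_{x+y} ≥ 1` at every grid point) has infimum value `2n`. -/
theorem full_grid_four_direction_dual_value (n : ℕ) (hn : 1 ≤ n) :
    IsGLB {t : ℝ | ∃ h v lp lm : ℤ → ℝ,
      (∀ y ∈ Finset.Icc (0 : ℤ) ((n : ℤ) - 1), 0 ≤ h y) ∧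
      (∀ x ∈ Finset.Icc (0 : ℤ) ((n : ℤ) - 1), 0 ≤ v x) ∧
      (∀ c ∈ Finset.Icc (-((n : ℤ) - 1)) ((n : ℤ) - 1), 0 ≤ lp c) ∧
      (∀ c ∈ Finset.Icc (0 : ℤ) (2 * (n : ℤ) - 2), 0 ≤ lm c) ∧
      (∀ x y : ℤ, 0 ≤ x → x ≤ (n : ℤ) - 1 → 0 ≤ y → y ≤ (n : ℤ) - 1 →
        1 ≤ h y + v x + lp (x - y) + lm (x + y)) ∧
      t = 2 * ((∑ y ∈ Finset.Icc (0 : ℤ) ((n : ℤ) - 1), h y)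
        + (∑ x ∈ Finset.Icc (0 : ℤ) ((n : ℤ) - 1), v x)
        + (∑ c ∈ Finset.Icc (-((n : ℤ) - 1)) ((n : ℤ) - 1), lp c)
        + (∑ c ∈ Finset.Icc (0 : ℤ) (2 * (n : ℤ) - 2), lm c))}
      (2 * n : ℝ) := by
  constructor
  · rintro t ⟨h, v, lp, lm, -, -, hlp, hlm, hcov, rfl⟩
    linarith [natCast_le_sum_weights_of_covers_grid hn hlp hlm hcov]
  · refine fun t ht => ht ⟨fun _ => 1 / 2, fun _ => 1 / 2, 0, 0, fun _ _ => by norm_num,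
      fun _ _ => by norm_num, fun _ _ => le_rfl, fun _ _ => le_rfl,
      fun _ _ _ _ _ _ => by norm_num, ?_⟩
    simp only [sum_const, Int.card_Icc_zero_natCast_sub_one, nsmul_eq_mul, Pi.zero_apply]
    ring
end

section
/- With p, c, d, e, f, g as defined, set 𝒞 = −c² + ce/2 + cf/2 + d² − de/2 − df/2 − 2d − g² + 2p² + 1, 𝒟 = −c − d − 2g + 4p, 𝓔 = −2c² + ce + cf − ef/2 − e/2 − f/2 − g²/2 + 2p², 𝓗 = −2c − g + 4p − 1. Then 𝒞𝓗 − 𝒟𝓔 ≠ 0, so there is a unique pair of reals (K, r) with K𝒞 + r𝒟 = 1 and K𝓔 + r𝓗 = 1, and this pair satisfies K > 0 and r < 0. -/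
/-!
By Cramer's rule the system has the unique solution `K = (𝓗 - 𝒟) / Δ`, `r = (𝒞 - 𝓔) / Δ`,
where `Δ = 𝒞𝓗 - 𝒟𝓔`. So it suffices to show `Δ < 0`, `𝓗 - 𝒟 < 0` and `𝒞 - 𝓔 > 0`. The
interval for `p` confines `c ≈ 0.5423` to an interval of width `10⁻⁴`, and there
`Δ ≈ -0.118`, `𝓗 - 𝒟 ≈ -0.148`, `𝒞 - 𝓔 ≈ 0.118`, far from zero compared with the widths
of the intervals.
-/

open Set

section LinearSystem

variable {α : Type*}

theorem mul_det_eq_of_linear_system [CommRing α] {C D E H K r : α}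
    (h₁ : K * C + r * D = 1) (h₂ : K * E + r * H = 1) :
    K * (C * H - D * E) = H - D ∧ r * (C * H - D * E) = C - E :=
  ⟨by linear_combination H * h₁ - D * h₂, by linear_combination -E * h₁ + C * h₂⟩

theorem existsUnique_linear_system_of_det_ne_zero [Field α] {C D E H : α}
    (hdet : C * H - D * E ≠ 0) :
    ∃! Kr : α × α, Kr.1 * C + Kr.2 * D = 1 ∧ Kr.1 * E + Kr.2 * H = 1 := by
  refine ⟨((H - D) / (C * H - D * E), (C - E) / (C * H - D * E)), ?_, ?_⟩
  · constructor <;>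
      rw [div_mul_eq_mul_div, div_mul_eq_mul_div, ← add_div, div_eq_one_iff_eq hdet] <;> ring
  · rintro ⟨K, r⟩ ⟨h₁, h₂⟩
    obtain ⟨hK, hr⟩ := mul_det_eq_of_linear_system h₁ h₂
    simp only [Prod.mk.injEq, eq_div_iff hdet]
    exact ⟨hK, hr⟩

theorem pos_neg_of_linear_system [CommRing α] [LinearOrder α] [IsStrictOrderedRing α]
    {C D E H K r : α} (hdet : C * H - D * E < 0) (hHD : H - D < 0) (hCE : 0 < C - E)
    (h₁ : K * C + r * D = 1) (h₂ : K * E + r * H = 1) : 0 < K ∧ r < 0 := by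
  obtain ⟨hK, hr⟩ := mul_det_eq_of_linear_system h₁ h₂
  exact ⟨pos_of_mul_neg_left (hK ▸ hHD) hdet.le, neg_of_mul_pos_left (hr ▸ hCE) hdet.le⟩

end LinearSystem

theorem certificate_c_mem_Ioo {p c : ℝ} (hp : p ∈ Ioo (2115883 / 10 ^ 7 : ℝ) (2115884 / 10 ^ 7))
    (hc : c = (187 * p ^ 3 - 211 * p ^ 2 + 61 * p - 5) / (2 * (71 * p ^ 2 - 66 * p + 11))) :
    c ∈ Ioo (5422 / 10 ^ 4 : ℝ) (5423 / 10 ^ 4) := by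
  obtain ⟨hp₁, hp₂⟩ := hp
  have hden : 0 < 2 * (71 * p ^ 2 - 66 * p + 11) := by nlinarith
  rw [hc]
  constructor
  · rw [lt_div_iff₀ hden]; nlinarith
  · rw [div_lt_iff₀ hden]; nlinarith

theorem certificate_det_neg_of_mem_Ioo {p c d e f g CC DD EE HH : ℝ}
    (hp : p ∈ Ioo (2115 / 10 ^ 4 : ℝ) (2116 / 10 ^ 4))
    (hc : c ∈ Ioo (5422 / 10 ^ 4 : ℝ) (5423 / 10 ^ 4))
    (hd : d = 1 + p - c) (he : e = (2 * c + 3 * p - 1) / 4) (hf : f = (-2 * c + 5 * p + 1) / 4)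
    (hg : g = (1 - 3 * p + 2 * c) / 2)
    (hCC : CC = -c ^ 2 + c * e / 2 + c * f / 2 + d ^ 2 - d * e / 2 - d * f / 2
      - 2 * d - g ^ 2 + 2 * p ^ 2 + 1)
    (hDD : DD = -c - d - 2 * g + 4 * p)
    (hEE : EE = -2 * c ^ 2 + c * e + c * f - e * f / 2 - e / 2 - f / 2 - g ^ 2 / 2 + 2 * p ^ 2)
    (hHH : HH = -2 * c - g + 4 * p - 1) :
    CC * HH - DD * EE < 0 ∧ HH - DD < 0 ∧ 0 < CC - EE := by
  obtain ⟨hp₁, hp₂⟩ := hp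
  obtain ⟨hc₁, hc₂⟩ := hc
  subst_vars
  exact ⟨by nlinarith, by linarith, by nlinarith⟩

theorem certificate_Kr_exists_unique_signs_general (p c d e f g CC DD EE HH : ℝ)
    (hpmem : p ∈ Set.Ioo (2115883 / 10 ^ 7 : ℝ) (2115884 / 10 ^ 7))
    (hc : c = (187 * p ^ 3 - 211 * p ^ 2 + 61 * p - 5) / (2 * (71 * p ^ 2 - 66 * p + 11)))
    (hd : d = 1 + p - c)
    (he : e = (2 * c + 3 * p - 1) / 4)
    (hf : f = (-2 * c + 5 * p + 1) / 4)
    (hg : g = (1 - 3 * p + 2 * c) / 2)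
    (hCC : CC = -c ^ 2 + c * e / 2 + c * f / 2 + d ^ 2 - d * e / 2 - d * f / 2
      - 2 * d - g ^ 2 + 2 * p ^ 2 + 1)
    (hDD : DD = -c - d - 2 * g + 4 * p)
    (hEE : EE = -2 * c ^ 2 + c * e + c * f - e * f / 2 - e / 2 - f / 2
      - g ^ 2 / 2 + 2 * p ^ 2)
    (hHH : HH = -2 * c - g + 4 * p - 1) :
    CC * HH - DD * EE ≠ 0
    ∧ (∃! Kr : ℝ × ℝ, Kr.1 * CC + Kr.2 * DD = 1 ∧ Kr.1 * EE + Kr.2 * HH = 1)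
    ∧ (∀ K r : ℝ, K * CC + r * DD = 1 → K * EE + r * HH = 1 → 0 < K ∧ r < 0) := by
  have hp : p ∈ Ioo (2115 / 10 ^ 4 : ℝ) (2116 / 10 ^ 4) :=
    ⟨by linarith [hpmem.1], by linarith [hpmem.2]⟩
  obtain ⟨hdet, hHD, hCE⟩ := certificate_det_neg_of_mem_Ioo hp (certificate_c_mem_Ioo hpmem hc)
    hd he hf hg hCC hDD hEE hHH
  exact ⟨hdet.ne, existsUnique_linear_system_of_det_ne_zero hdet.ne,
    fun _ _ ↦ pos_neg_of_linear_system hdet hHD hCE⟩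

/-- With `p` the specified cubic root and the breakpoints and reduced quantities
`𝒞, 𝒟, 𝓔, 𝓗` as in the odd-fat continuum certificate, the determinant `𝒞𝓗 − 𝒟𝓔` is
nonzero, so a unique pair `(K, r)` solves `K𝒞 + r𝒟 = 1` and `K𝓔 + r𝓗 = 1`, and this
pair satisfies `K > 0` and `r < 0`. -/
theorem certificate_Kr_exists_unique_signs (p c d e f g CC DD EE HH : ℝ)
    (hproot : 401 * p ^ 3 - 331 * p ^ 2 + 19 * p + 7 = 0)
    (hpmem : p ∈ Set.Ioo (2115883 / 10 ^ 7 : ℝ) (2115884 / 10 ^ 7))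
    (hc : c = (187 * p ^ 3 - 211 * p ^ 2 + 61 * p - 5) / (2 * (71 * p ^ 2 - 66 * p + 11)))
    (hd : d = 1 + p - c)
    (he : e = (2 * c + 3 * p - 1) / 4)
    (hf : f = (-2 * c + 5 * p + 1) / 4)
    (hg : g = (1 - 3 * p + 2 * c) / 2)
    (hCC : CC = -c ^ 2 + c * e / 2 + c * f / 2 + d ^ 2 - d * e / 2 - d * f / 2
      - 2 * d - g ^ 2 + 2 * p ^ 2 + 1)
    (hDD : DD = -c - d - 2 * g + 4 * p)
    (hEE : EE = -2 * c ^ 2 + c * e + c * f - e * f / 2 - e / 2 - f / 2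
      - g ^ 2 / 2 + 2 * p ^ 2)
    (hHH : HH = -2 * c - g + 4 * p - 1) :
    CC * HH - DD * EE ≠ 0
    ∧ (∃! Kr : ℝ × ℝ, Kr.1 * CC + Kr.2 * DD = 1 ∧ Kr.1 * EE + Kr.2 * HH = 1)
    ∧ (∀ K r : ℝ, K * CC + r * DD = 1 → K * EE + r * HH = 1 → 0 < K ∧ r < 0) :=
  certificate_Kr_exists_unique_signs_general p c d e f g CC DD EE HH hpmem hc hd he hf hg hCC hDD
    hEE hHH
end

section
/- With p the specified cubic root and all derived constants and the piecewise function A as defined in the certificate, A(t) ≥ 0 for every t ∈ [0,1]. -/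
set_option maxHeartbeats 2000000 in
/-- With `p` the specified cubic root and all derived constants as in the odd-fat
continuum certificate, the piecewise certificate function `A` is nonnegative on
`[0,1]`. -/
theorem certificate_A_nonneg (p c d e f g CC DD EE HH K r s l q n1 nu n2 : ℝ)
    (hproot : 401 * p ^ 3 - 331 * p ^ 2 + 19 * p + 7 = 0)
    (hpmem : p ∈ Set.Ioo (2115883 / 10 ^ 7 : ℝ) (2115884 / 10 ^ 7))
    (hc : c = (187 * p ^ 3 - 211 * p ^ 2 + 61 * p - 5) / (2 * (71 * p ^ 2 - 66 * p + 11)))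
    (hd : d = 1 + p - c)
    (he : e = (2 * c + 3 * p - 1) / 4)
    (hf : f = (-2 * c + 5 * p + 1) / 4)
    (hg : g = (1 - 3 * p + 2 * c) / 2)
    (hCC : CC = -c ^ 2 + c * e / 2 + c * f / 2 + d ^ 2 - d * e / 2 - d * f / 2
      - 2 * d - g ^ 2 + 2 * p ^ 2 + 1)
    (hDD : DD = -c - d - 2 * g + 4 * p)
    (hEE : EE = -2 * c ^ 2 + c * e + c * f - e * f / 2 - e / 2 - f / 2
      - g ^ 2 / 2 + 2 * p ^ 2)
    (hHH : HH = -2 * c - g + 4 * p - 1)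
    (hK1 : K * CC + r * DD = 1)
    (hK2 : K * EE + r * HH = 1)
    (hs : s = -(K / 2) * g ^ 2 - r * g)
    (hl : l = -((K / 2) * (e + f) + r))
    (hq : q = -(K / 2) * (e * f) - (K / 2) * g ^ 2 - r * g)
    (hn1 : n1 = K * p ^ 2 + 2 * r * p)
    (hnu : nu = (-2 * K * c ^ 2 + K * c * e + K * c * f + 2 * K * p ^ 2
      - 2 * c * r + 4 * p * r) / 2)
    (hn2 : n2 = (-2 * K * c ^ 2 + K * c * e + K * c * f + 2 * K * d ^ 2
      - K * d * e - K * d * f - 4 * K * d + 2 * K * p ^ 2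
      - 2 * c * r - 2 * d * r + 4 * p * r) / 2)
    (A : ℝ → ℝ)
    (hA : ∀ t : ℝ, A t = if t ≤ p then 0
      else if t ≤ c then -K * t ^ 2 - 2 * r * t + n1
      else if t ≤ d then l * t + nu
      else -K * t ^ 2 + 2 * K * t + n2)
    :
    ∀ t ∈ Set.Icc (0 : ℝ) 1, 0 ≤ A t := by
  obtain ⟨hp1, hp2⟩ := hpmem
  have hp1' : (0.2115883 : ℝ) < p := by norm_num; linarith only [hp1]
  have hp2' : p < (0.2115884 : ℝ) := by norm_num; linarith only [hp2]
  have hbp : (0:ℝ) ≤ (p - 0.2115883) * (0.2115884 - p) :=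
    le_of_lt (mul_pos (by linarith only [hp1']) (by linarith only [hp2']))
  have hsp : (0:ℝ) ≤ (p - 0.21158835) ^ 2 := sq_nonneg _
  -- bounds on c
  have hclo : (0.542284 : ℝ) < c := by
    rw [hc, lt_div_iff₀ (by linarith only [hsp, hp1', hp2'])]
    linarith only [hproot, hbp, hsp, hp1', hp2']
  have hchi : c < (0.542310 : ℝ) := by
    rw [hc, div_lt_iff₀ (by linarith only [hsp, hp1', hp2'])]
    linarith only [hproot, hbp, hsp, hp1', hp2']
  clear hc hp1 hp2 hproot
  subst hd he hf hg
  subst hl hn1 hnu hn2 hs hq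
  -- box product facts
  have hbc : (0:ℝ) ≤ (c - 0.542284) * (0.542310 - c) :=
    le_of_lt (mul_pos (by linarith only [hclo]) (by linarith only [hchi]))
  have hsc : (0:ℝ) ≤ (c - 0.542297) ^ 2 := sq_nonneg _
  have hpc1 : (0:ℝ) ≤ (p - 0.2115883) * (c - 0.542284) :=
    le_of_lt (mul_pos (by linarith only [hp1']) (by linarith only [hclo]))
  have hpc2 : (0:ℝ) ≤ (0.2115884 - p) * (0.542310 - c) :=
    le_of_lt (mul_pos (by linarith only [hp2']) (by linarith only [hchi]))
  have hpc3 : (0:ℝ) ≤ (p - 0.2115883) * (0.542310 - c) :=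
    le_of_lt (mul_pos (by linarith only [hp1']) (by linarith only [hchi]))
  have hpc4 : (0:ℝ) ≤ (0.2115884 - p) * (c - 0.542284) :=
    le_of_lt (mul_pos (by linarith only [hp2']) (by linarith only [hclo]))
  -- component bounds
  have hCC1 : CC ≤ -0.64753 := by rw [hCC]; linarith only [hbp, hbc, hsp, hsc, hpc1, hpc2, hpc3, hpc4, hp1', hp2', hclo, hchi]
  have hCC2 : -0.64757 ≤ CC := by rw [hCC]; linarith only [hbp, hbc, hsp, hsc, hpc1, hpc2, hpc3, hpc4, hp1', hp2', hclo, hchi]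
  have hDD1 : DD ≤ -1.81503 := by rw [hDD]; linarith only [hp1', hp2', hclo, hchi]
  have hDD2 : -1.8151 ≤ DD := by rw [hDD]; linarith only [hp1', hp2', hclo, hchi]
  have hEE1 : EE ≤ -0.76533 := by rw [hEE]; linarith only [hbp, hbc, hsp, hsc, hpc1, hpc2, hpc3, hpc4, hp1', hp2', hclo, hchi]
  have hEE2 : -0.7654 ≤ EE := by rw [hEE]; linarith only [hbp, hbc, hsp, hsc, hpc1, hpc2, hpc3, hpc4, hp1', hp2', hclo, hchi]
  have hHH1 : HH ≤ -1.96311 := by rw [hHH]; linarith only [hp1', hp2', hclo, hchi]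
  have hHH2 : -1.9632 ≤ HH := by rw [hHH]; linarith only [hp1', hp2', hclo, hchi]
  -- determinant bounds
  have hq1 : (0:ℝ) ≤ (-0.64753 - CC) * (-1.96311 - HH) := mul_nonneg (by linarith only [hCC1]) (by linarith only [hHH1])
  have hq2 : (0:ℝ) ≤ (CC + 0.64757) * (HH + 1.9632) := mul_nonneg (by linarith only [hCC2]) (by linarith only [hHH2])
  have hq3 : (0:ℝ) ≤ (-0.64753 - CC) * (HH + 1.9632) := mul_nonneg (by linarith only [hCC1]) (by linarith only [hHH2])
  have hq4 : (0:ℝ) ≤ (CC + 0.64757) * (-1.96311 - HH) := mul_nonneg (by linarith only [hCC2]) (by linarith only [hHH1])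
  have hq5 : (0:ℝ) ≤ (-1.81503 - DD) * (-0.76533 - EE) := mul_nonneg (by linarith only [hDD1]) (by linarith only [hEE1])
  have hq6 : (0:ℝ) ≤ (DD + 1.8151) * (EE + 0.7654) := mul_nonneg (by linarith only [hDD2]) (by linarith only [hEE2])
  have hq7 : (0:ℝ) ≤ (-1.81503 - DD) * (EE + 0.7654) := mul_nonneg (by linarith only [hDD1]) (by linarith only [hEE2])
  have hq8 : (0:ℝ) ≤ (DD + 1.8151) * (-0.76533 - EE) := mul_nonneg (by linarith only [hDD2]) (by linarith only [hEE1])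
  have hDel1 : CC * HH - DD * EE ≤ -0.11778 := by
    linarith only [hq1, hq2, hq3, hq4, hq5, hq6, hq7, hq8, hCC1, hCC2, hDD1, hDD2, hEE1, hEE2, hHH1, hHH2]
  have hDel2 : -0.11811 ≤ CC * HH - DD * EE := by
    linarith only [hq1, hq2, hq3, hq4, hq5, hq6, hq7, hq8, hCC1, hCC2, hDD1, hDD2, hEE1, hEE2, hHH1, hHH2]
  have hKD : K * (CC * HH - DD * EE) = HH - DD := by linear_combination HH * hK1 - DD * hK2
  have hrD : r * (CC * HH - DD * EE) = CC - EE := by linear_combination CC * hK2 - EE * hK1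
  -- K and r bounds
  have hKpos : 0 < K := by
    rcases lt_or_ge 0 K with h | h
    · exact h
    · exfalso
      have h0 : (0:ℝ) ≤ (-K) * (-(CC * HH - DD * EE)) :=
        mul_nonneg (by linarith only [h]) (by linarith only [hDel1])
      linarith only [h0, hKD, hHH1, hDD2]
  have hKub : K ≤ 1.26 := by
    have h0 : (0:ℝ) ≤ K * (-0.11778 - (CC * HH - DD * EE)) :=
      mul_nonneg hKpos.le (by linarith only [hDel1])
    linarith only [h0, hKD, hDD1, hHH2]
  have hrub : r ≤ -0.9 := by
    rcases le_or_gt r (-0.9) with h | h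
    · exact h
    · exfalso
      have h0 : (0:ℝ) ≤ (r + 0.9) * (-(CC * HH - DD * EE)) :=
        mul_nonneg (by linarith only [h]) (by linarith only [hDel1])
      linarith only [h0, hrD, hDel2, hCC2, hEE1]
  clear hK1 hK2 hKD hrD hCC hDD hEE hHH hCC1 hCC2 hDD1 hDD2 hEE1 hEE2 hHH1 hHH2
  clear hq1 hq2 hq3 hq4 hq5 hq6 hq7 hq8 hDel1 hDel2
  -- helper inequalities
  have hKc : (0:ℝ) ≤ (1.26 - K) * (c + p) := mul_nonneg (by linarith only [hKub]) (by linarith only [hclo, hp1'])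
  have hKp : (0:ℝ) ≤ (1.26 - K) * p := mul_nonneg (by linarith only [hKub]) (by linarith only [hp1'])
  have hkeyc : K * (c + p) + 2 * r ≤ 0 := by linarith only [hKc, hrub, hchi, hp2']
  have hAc : 0 ≤ -K * c ^ 2 - 2 * r * c + (K * p ^ 2 + 2 * r * p) := by
    have hfa : (0:ℝ) ≤ (c - p) * (-(K * (c + p) + 2 * r)) :=
      mul_nonneg (by linarith only [hclo, hp2']) (by linarith only [hkeyc])
    linarith only [hfa]
  have hl0 : (0:ℝ) ≤ -(K * p + r) := by linarith only [hKp, hrub, hp2']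
  -- main argument
  intro t ht
  obtain ⟨ht0, ht1⟩ := ht
  rw [hA t]
  split_ifs with h1 h2 h3
  · exact le_refl 0
  · push_neg at h1
    have hKt : (0:ℝ) ≤ K * (c - t) := mul_nonneg hKpos.le (by linarith only [h2])
    have hkey : K * (t + p) + 2 * r ≤ 0 := by linarith only [hKt, hkeyc]
    have hfa : (0:ℝ) ≤ (t - p) * (-(K * (t + p) + 2 * r)) :=
      mul_nonneg (by linarith only [h1]) (by linarith only [hkey])
    linarith only [hfa]
  · push_neg at h2
    have hlt : (0:ℝ) ≤ -(K * p + r) * (t - c) := mul_nonneg hl0 (by linarith only [h2])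
    linarith only [hAc, hlt]
  · push_neg at h3
    have hAd : 0 ≤ -(K / 2 * ((2 * c + 3 * p - 1) / 4 + (-2 * c + 5 * p + 1) / 4) + r)
        * (1 + p - c)
        + (-2 * K * c ^ 2 + K * c * ((2 * c + 3 * p - 1) / 4)
          + K * c * ((-2 * c + 5 * p + 1) / 4) + 2 * K * p ^ 2
          - 2 * c * r + 4 * p * r) / 2 := by
      have hld : (0:ℝ) ≤ -(K * p + r) * ((1 + p - c) - c) := mul_nonneg hl0 (by linarith only [hp1', hchi])
      linarith only [hAc, hld]
    have hqu : (0:ℝ) ≤ (K * (t - (1 + p - c))) * (2 - t - (1 + p - c)) :=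
      mul_nonneg (mul_nonneg hKpos.le (by linarith only [h3])) (by linarith only [ht1, hclo, hp2'])
    linarith only [hAd, hqu]
end

section
/- With p the specified cubic root and all derived constants and the piecewise function B as defined in the certificate, B(t) ≥ 0 for every t ∈ [0,1]. -/
set_option maxHeartbeats 1000000

private lemma aux_p (p : ℝ) (h1 : (2115883 / 10 ^ 7 : ℝ) < p) (h2 : p < (2115884 / 10 ^ 7 : ℝ)) :
    (223848043/5000000000) < p ^ 2 ∧ p ^ 2 < (447696511/10000000000) ∧ (5920453/625000000) < p ^ 3 ∧ p ^ 3 < (47363697/5000000000) := by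
  have hs1 : (0:ℝ) < (p - 2115883/10^7) * (p - 2115883/10^7) := mul_pos (by linarith) (by linarith)
  have hs2 : (0:ℝ) < (2115884/10^7 - p) * (2115884/10^7 - p) := mul_pos (by linarith) (by linarith)
  have h2l : (223848043/5000000000) < p ^ 2 := by linarith [hs1]
  have h2u : p ^ 2 < (447696511/10000000000) := by nlinarith [hs2]
  refine ⟨h2l, h2u, ?_, ?_⟩
  · linarith [mul_pos (by linarith : (0:ℝ) < p - 2115883/10^7) (by linarith : (0:ℝ) < p ^ 2 - (223848043/5000000000))]
  · nlinarith [mul_pos (by linarith : (0:ℝ) < 2115884/10^7 - p) (by linarith : (0:ℝ) < (447696511/10000000000) - p ^ 2)]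

private lemma aux_CC (p c d e f g CC : ℝ)
    (hp2l : (223848043/5000000000) < p ^ 2) (hp2u : p ^ 2 < (447696511/10000000000))
    (hcl : (542259/1000000) < c) (hcu : c < (67791/125000)) (hdl : (669259/1000000) < d) (hdu : d < (669331/1000000)) (hel : (179819/1000000) < e) (heu : e < (179857/1000000)) (hfl : (6083/25000) < f) (hfu : f < (243357/1000000)) (hgl : (5799/8000) < g) (hgu : g < (724947/1000000))
    (hCC : CC = -c ^ 2 + c * e / 2 + c * f / 2 + d ^ 2 - d * e / 2 - d * f / 2
      - 2 * d - g ^ 2 + 2 * p ^ 2 + 1) :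
    (-64781/100000) < CC ∧ CC < (-8091/12500) := by
  constructor
  · rw [hCC]
    linarith [mul_pos (by linarith : (0:ℝ) < c - (542259/1000000)) (by linarith : (0:ℝ) < (67791/125000) - c),
      mul_pos (by linarith : (0:ℝ) < c - (542259/1000000)) (by linarith : (0:ℝ) < e - (179819/1000000)),
      mul_pos (by linarith : (0:ℝ) < (67791/125000) - c) (by linarith : (0:ℝ) < (179857/1000000) - e),
      mul_pos (by linarith : (0:ℝ) < c - (542259/1000000)) (by linarith : (0:ℝ) < f - (6083/25000)),
      mul_pos (by linarith : (0:ℝ) < (67791/125000) - c) (by linarith : (0:ℝ) < (243357/1000000) - f),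
      mul_pos (by linarith : (0:ℝ) < d - (669259/1000000)) (by linarith : (0:ℝ) < d - (669259/1000000)),
      mul_pos (by linarith : (0:ℝ) < (669331/1000000) - d) (by linarith : (0:ℝ) < (669331/1000000) - d),
      mul_pos (by linarith : (0:ℝ) < d - (669259/1000000)) (by linarith : (0:ℝ) < (179857/1000000) - e),
      mul_pos (by linarith : (0:ℝ) < (669331/1000000) - d) (by linarith : (0:ℝ) < e - (179819/1000000)),
      mul_pos (by linarith : (0:ℝ) < d - (669259/1000000)) (by linarith : (0:ℝ) < (243357/1000000) - f),
      mul_pos (by linarith : (0:ℝ) < (669331/1000000) - d) (by linarith : (0:ℝ) < f - (6083/25000)),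
      mul_pos (by linarith : (0:ℝ) < g - (5799/8000)) (by linarith : (0:ℝ) < (724947/1000000) - g)]
  · rw [hCC]
    linarith [mul_pos (by linarith : (0:ℝ) < c - (542259/1000000)) (by linarith : (0:ℝ) < c - (542259/1000000)),
      mul_pos (by linarith : (0:ℝ) < (67791/125000) - c) (by linarith : (0:ℝ) < (67791/125000) - c),
      mul_pos (by linarith : (0:ℝ) < c - (542259/1000000)) (by linarith : (0:ℝ) < (179857/1000000) - e),
      mul_pos (by linarith : (0:ℝ) < (67791/125000) - c) (by linarith : (0:ℝ) < e - (179819/1000000)),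
      mul_pos (by linarith : (0:ℝ) < c - (542259/1000000)) (by linarith : (0:ℝ) < (243357/1000000) - f),
      mul_pos (by linarith : (0:ℝ) < (67791/125000) - c) (by linarith : (0:ℝ) < f - (6083/25000)),
      mul_pos (by linarith : (0:ℝ) < d - (669259/1000000)) (by linarith : (0:ℝ) < (669331/1000000) - d),
      mul_pos (by linarith : (0:ℝ) < d - (669259/1000000)) (by linarith : (0:ℝ) < e - (179819/1000000)),
      mul_pos (by linarith : (0:ℝ) < (669331/1000000) - d) (by linarith : (0:ℝ) < (179857/1000000) - e),
      mul_pos (by linarith : (0:ℝ) < d - (669259/1000000)) (by linarith : (0:ℝ) < f - (6083/25000)),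
      mul_pos (by linarith : (0:ℝ) < (669331/1000000) - d) (by linarith : (0:ℝ) < (243357/1000000) - f),
      mul_pos (by linarith : (0:ℝ) < g - (5799/8000)) (by linarith : (0:ℝ) < g - (5799/8000)),
      mul_pos (by linarith : (0:ℝ) < (724947/1000000) - g) (by linarith : (0:ℝ) < (724947/1000000) - g)]

private lemma aux_EE (p c d e f g EE : ℝ)
    (hp2l : (223848043/5000000000) < p ^ 2) (hp2u : p ^ 2 < (447696511/10000000000))
    (hcl : (542259/1000000) < c) (hcu : c < (67791/125000)) (hdl : (669259/1000000) < d) (hdu : d < (669331/1000000)) (hel : (179819/1000000) < e) (heu : e < (179857/1000000)) (hfl : (6083/25000) < f) (hfu : f < (243357/1000000)) (hgl : (5799/8000) < g) (hgu : g < (724947/1000000))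
    (hEE : EE = -2 * c ^ 2 + c * e + c * f - e * f / 2 - e / 2 - f / 2
      - g ^ 2 / 2 + 2 * p ^ 2) :
    (-76553/100000) < EE ∧ EE < (-38259/50000) := by
  constructor
  · rw [hEE]
    linarith [mul_pos (by linarith : (0:ℝ) < c - (542259/1000000)) (by linarith : (0:ℝ) < (67791/125000) - c),
      mul_pos (by linarith : (0:ℝ) < c - (542259/1000000)) (by linarith : (0:ℝ) < e - (179819/1000000)),
      mul_pos (by linarith : (0:ℝ) < (67791/125000) - c) (by linarith : (0:ℝ) < (179857/1000000) - e),
      mul_pos (by linarith : (0:ℝ) < c - (542259/1000000)) (by linarith : (0:ℝ) < f - (6083/25000)),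
      mul_pos (by linarith : (0:ℝ) < (67791/125000) - c) (by linarith : (0:ℝ) < (243357/1000000) - f),
      mul_pos (by linarith : (0:ℝ) < e - (179819/1000000)) (by linarith : (0:ℝ) < (243357/1000000) - f),
      mul_pos (by linarith : (0:ℝ) < (179857/1000000) - e) (by linarith : (0:ℝ) < f - (6083/25000)),
      mul_pos (by linarith : (0:ℝ) < g - (5799/8000)) (by linarith : (0:ℝ) < (724947/1000000) - g)]
  · rw [hEE]
    linarith [mul_pos (by linarith : (0:ℝ) < c - (542259/1000000)) (by linarith : (0:ℝ) < c - (542259/1000000)),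
      mul_pos (by linarith : (0:ℝ) < (67791/125000) - c) (by linarith : (0:ℝ) < (67791/125000) - c),
      mul_pos (by linarith : (0:ℝ) < c - (542259/1000000)) (by linarith : (0:ℝ) < (179857/1000000) - e),
      mul_pos (by linarith : (0:ℝ) < (67791/125000) - c) (by linarith : (0:ℝ) < e - (179819/1000000)),
      mul_pos (by linarith : (0:ℝ) < c - (542259/1000000)) (by linarith : (0:ℝ) < (243357/1000000) - f),
      mul_pos (by linarith : (0:ℝ) < (67791/125000) - c) (by linarith : (0:ℝ) < f - (6083/25000)),
      mul_pos (by linarith : (0:ℝ) < e - (179819/1000000)) (by linarith : (0:ℝ) < f - (6083/25000)),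
      mul_pos (by linarith : (0:ℝ) < (179857/1000000) - e) (by linarith : (0:ℝ) < (243357/1000000) - f),
      mul_pos (by linarith : (0:ℝ) < g - (5799/8000)) (by linarith : (0:ℝ) < g - (5799/8000)),
      mul_pos (by linarith : (0:ℝ) < (724947/1000000) - g) (by linarith : (0:ℝ) < (724947/1000000) - g)]

private lemma aux_det (CC DD EE HH : ℝ)
    (hCCl : (-64781/100000) < CC) (hCCu : CC < (-8091/12500)) (hDDl : (-181521/100000) < DD) (hDDu : DD < (-18149/10000)) (hEEl : (-76553/100000) < EE) (hEEu : EE < (-38259/50000)) (hHHl : (-98163/50000) < HH) (hHHu : HH < (-98151/50000)) :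
    (-11899/100000) < CC * HH - DD * EE ∧ CC * HH - DD * EE < (-11689/100000) := by
  constructor
  · linarith [mul_pos (by linarith : (0:ℝ) < CC - (-64781/100000)) (by linarith : (0:ℝ) < HH - (-98163/50000)),
      mul_pos (by linarith : (0:ℝ) < (-8091/12500) - CC) (by linarith : (0:ℝ) < (-98151/50000) - HH),
      mul_pos (by linarith : (0:ℝ) < DD - (-181521/100000)) (by linarith : (0:ℝ) < (-38259/50000) - EE),
      mul_pos (by linarith : (0:ℝ) < (-18149/10000) - DD) (by linarith : (0:ℝ) < EE - (-76553/100000))]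
  · linarith [mul_pos (by linarith : (0:ℝ) < CC - (-64781/100000)) (by linarith : (0:ℝ) < (-98151/50000) - HH),
      mul_pos (by linarith : (0:ℝ) < (-8091/12500) - CC) (by linarith : (0:ℝ) < HH - (-98163/50000)),
      mul_pos (by linarith : (0:ℝ) < DD - (-181521/100000)) (by linarith : (0:ℝ) < EE - (-76553/100000)),
      mul_pos (by linarith : (0:ℝ) < (-18149/10000) - DD) (by linarith : (0:ℝ) < (-38259/50000) - EE)]

private lemma aux_Kr (CC DD EE HH K r : ℝ)
    (hCCl : (-64781/100000) < CC) (hCCu : CC < (-8091/12500)) (hDDl : (-181521/100000) < DD) (hDDu : DD < (-18149/10000)) (hEEl : (-76553/100000) < EE) (hEEu : EE < (-38259/50000)) (hHHl : (-98163/50000) < HH) (hHHu : HH < (-98151/50000))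
    (hK1 : K * CC + r * DD = 1) (hK2 : K * EE + r * HH = 1) :
    124/100 < K ∧ K < 127/100 ∧ -(102/100) < r ∧ r < -(98/100) := by
  have hKdet : K * (CC * HH - DD * EE) = HH - DD := by linear_combination HH * hK1 - DD * hK2
  have hrdet : r * (CC * HH - DD * EE) = CC - EE := by linear_combination CC * hK2 - EE * hK1
  obtain ⟨hDl, hDu⟩ := aux_det CC DD EE HH hCCl hCCu hDDl hDDu hEEl hEEu hHHl hHHu
  refine ⟨?_, ?_, ?_, ?_⟩
  · by_contra hcon
    push_neg at hcon
    linarith [mul_nonneg (by linarith : (0:ℝ) ≤ 124/100 - K)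
      (by linarith : (0:ℝ) ≤ -(CC * HH - DD * EE)), hKdet, hDl, hHHu, hDDl]
  · by_contra hcon
    push_neg at hcon
    linarith [mul_nonneg (by linarith : (0:ℝ) ≤ K - 127/100)
      (by linarith : (0:ℝ) ≤ -(CC * HH - DD * EE)), hKdet, hDu, hHHl, hDDu]
  · by_contra hcon
    push_neg at hcon
    linarith [mul_nonneg (by linarith : (0:ℝ) ≤ -(102/100) - r)
      (by linarith : (0:ℝ) ≤ -(CC * HH - DD * EE)), hrdet, hDu, hCCu, hEEl]
  · by_contra hcon
    push_neg at hcon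
    linarith [mul_nonneg (by linarith : (0:ℝ) ≤ r + 98/100)
      (by linarith : (0:ℝ) ≤ -(CC * HH - DD * EE)), hrdet, hDl, hCCl, hEEu]

private lemma aux_key (K r s g : ℝ)
    (hKl : 124/100 < K) (hKu : K < 127/100) (hru : r < -(98/100))
    (hgl : (5799/8000) < g) (hgu : g < (724947/1000000)) (hs : s = -(K / 2) * g ^ 2 - r * g) :
    ∀ u : ℝ, 0 ≤ u → u ≤ g → 0 ≤ K / 2 * u ^ 2 + r * u + s := by
  intro u hu0 hug
  have hfac : 0 ≤ -(K / 2) * (u + g) - r := by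
    linarith [mul_nonneg (by linarith : (0:ℝ) ≤ K) (by linarith : (0:ℝ) ≤ g - u),
      mul_nonneg (by linarith : (0:ℝ) ≤ 127/100 - K) (by linarith : (0:ℝ) ≤ g)]
  have hprod : 0 ≤ (g - u) * (-(K / 2) * (u + g) - r) := mul_nonneg (by linarith) hfac
  linarith [hprod, hs]

private lemma aux_mid (K r s l q e f g t : ℝ)
    (hKl : 124/100 < K) (hKu : K < 127/100) (hrl : -(102/100) < r) (hru : r < -(98/100))
    (hel : (179819/1000000) < e) (heu : e < (179857/1000000)) (hfl : (6083/25000) < f) (hfu : f < (243357/1000000)) (hgl : (5799/8000) < g) (hgu : g < (724947/1000000))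
    (hs : s = -(K / 2) * g ^ 2 - r * g)
    (hl : l = -((K / 2) * (e + f) + r))
    (hq : q = -(K / 2) * (e * f) - (K / 2) * g ^ 2 - r * g)
    (ht : t ≤ f) (ht0 : 0 ≤ t) :
    0 ≤ -l * t + q := by
  have hBQf := aux_key K r s g hKl hKu hru hgl hgu hs f (by linarith) (by linarith)
  subst hs hl hq
  have hl0 : (0:ℝ) ≤ -(K / 2 * (e + f) + r) := by
    linarith [mul_nonneg (by linarith : (0:ℝ) ≤ 127/100 - K) (by linarith : (0:ℝ) ≤ e + f)]
  have hprod : 0 ≤ -(K / 2 * (e + f) + r) * (f - t) := mul_nonneg hl0 (by linarith)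
  linarith [hBQf, hprod]

/-- With `p` the specified cubic root and all derived constants as in the odd-fat
continuum certificate, the piecewise certificate function `B` is nonnegative on
`[0,1]`. -/
theorem certificate_B_nonneg (p c d e f g CC DD EE HH K r s l q n1 nu n2 : ℝ)
    (hproot : 401 * p ^ 3 - 331 * p ^ 2 + 19 * p + 7 = 0)
    (hpmem : p ∈ Set.Ioo (2115883 / 10 ^ 7 : ℝ) (2115884 / 10 ^ 7))
    (hc : c = (187 * p ^ 3 - 211 * p ^ 2 + 61 * p - 5) / (2 * (71 * p ^ 2 - 66 * p + 11)))
    (hd : d = 1 + p - c)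
    (he : e = (2 * c + 3 * p - 1) / 4)
    (hf : f = (-2 * c + 5 * p + 1) / 4)
    (hg : g = (1 - 3 * p + 2 * c) / 2)
    (hCC : CC = -c ^ 2 + c * e / 2 + c * f / 2 + d ^ 2 - d * e / 2 - d * f / 2
      - 2 * d - g ^ 2 + 2 * p ^ 2 + 1)
    (hDD : DD = -c - d - 2 * g + 4 * p)
    (hEE : EE = -2 * c ^ 2 + c * e + c * f - e * f / 2 - e / 2 - f / 2
      - g ^ 2 / 2 + 2 * p ^ 2)
    (hHH : HH = -2 * c - g + 4 * p - 1)
    (hK1 : K * CC + r * DD = 1)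
    (hK2 : K * EE + r * HH = 1)
    (hs : s = -(K / 2) * g ^ 2 - r * g)
    (hl : l = -((K / 2) * (e + f) + r))
    (hq : q = -(K / 2) * (e * f) - (K / 2) * g ^ 2 - r * g)
    (hn1 : n1 = K * p ^ 2 + 2 * r * p)
    (hnu : nu = (-2 * K * c ^ 2 + K * c * e + K * c * f + 2 * K * p ^ 2
      - 2 * c * r + 4 * p * r) / 2)
    (hn2 : n2 = (-2 * K * c ^ 2 + K * c * e + K * c * f + 2 * K * d ^ 2
      - K * d * e - K * d * f - 4 * K * d + 2 * K * p ^ 2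
      - 2 * c * r - 2 * d * r + 4 * p * r) / 2)
    (B : ℝ → ℝ)
    (hB : ∀ t : ℝ, B t = if t ≤ e then K / 2 * t ^ 2 + r * t + s
      else if t ≤ f then -l * t + q
      else if t ≤ g then K / 2 * t ^ 2 + r * t + s
      else 0)
    :
    ∀ t ∈ Set.Icc (0 : ℝ) 1, 0 ≤ B t := by
  have hp1 : (2115883 / 10 ^ 7 : ℝ) < p := hpmem.1
  have hp2 : p < (2115884 / 10 ^ 7 : ℝ) := hpmem.2
  obtain ⟨hp2l, hp2u, hp3l, hp3u⟩ := aux_p p hp1 hp2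
  have hden : (0:ℝ) < 2 * (71 * p ^ 2 - 66 * p + 11) := by linarith
  have hcl : (542259/1000000) < c := by rw [hc, lt_div_iff₀ hden]; linarith
  have hcu : c < (67791/125000) := by rw [hc, div_lt_iff₀ hden]; linarith
  have hdl : (669259/1000000) < d := by rw [hd]; linarith
  have hdu : d < (669331/1000000) := by rw [hd]; linarith
  have hel : (179819/1000000) < e := by rw [he]; linarith
  have heu : e < (179857/1000000) := by rw [he]; linarith
  have hfl : (6083/25000) < f := by rw [hf]; linarith
  have hfu : f < (243357/1000000) := by rw [hf]; linarith
  have hgl : (5799/8000) < g := by rw [hg]; linarith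
  have hgu : g < (724947/1000000) := by rw [hg]; linarith
  obtain ⟨hCCl, hCCu⟩ := aux_CC p c d e f g CC hp2l hp2u hcl hcu hdl hdu hel heu hfl hfu hgl hgu hCC
  obtain ⟨hEEl, hEEu⟩ := aux_EE p c d e f g EE hp2l hp2u hcl hcu hdl hdu hel heu hfl hfu hgl hgu hEE
  have hDDl : (-181521/100000) < DD := by rw [hDD]; linarith
  have hDDu : DD < (-18149/10000) := by rw [hDD]; linarith
  have hHHl : (-98163/50000) < HH := by rw [hHH]; linarith
  have hHHu : HH < (-98151/50000) := by rw [hHH]; linarith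
  obtain ⟨hKl, hKu, hrl, hru⟩ := aux_Kr CC DD EE HH K r hCCl hCCu hDDl hDDu hEEl hEEu hHHl hHHu hK1 hK2
  intro t ht
  obtain ⟨ht0, ht1⟩ := ht
  rw [hB t]
  split_ifs with h1 h2 h3
  · exact aux_key K r s g hKl hKu hru hgl hgu hs t ht0 (by linarith)
  · exact aux_mid K r s l q e f g t hKl hKu hrl hru hel heu hfl hfu hgl hgu hs hl hq h2 ht0
  · exact aux_key K r s g hKl hKu hru hgl hgu hs t ht0 h3
  · exact le_rfl
end

section
/- With p the specified cubic root and the certificate functions A and B as defined, the objective value Φ = 4∫₀¹ (A(t) + B(t)) dt satisfies the cubic equation 401Φ³ − 1744Φ² + 2240Φ − 768 = 0, and moreover 157/100 < Φ < 158/100. -/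
/-!
Since `p` is a root of its cubic, `c = (5 + 256p - 401p²)/76`, which lies in `(1/2, 14/25)` for
`p` in the given interval, so the breakpoints are ordered: `0 ≤ p ≤ c ≤ d ≤ 1` and
`0 ≤ e ≤ f ≤ g ≤ 1`. Integrating the pieces of `A` and `B` then gives `∫₀¹ (A + B)` as a linear
form `X K + Y r` whose coefficients are polynomials in `p` and `c`. Modulo the relations defining
`p` and `c`, `X = (c - p) 𝒞 + (d - c)/2 𝓔` and `Y = (c - p) 𝒟 + (d - c)/2 𝓗`, so the two
normalisations of `(K, r)` give `∫₀¹ (A + B) = (c - p) + (d - c)/2 = (1 - p)/2`, i.e.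
`Φ = 2 - 2p`. Substituting `p = 1 - Φ/2` into the cubic of `p` gives the cubic of `Φ`, and the
bounds on `p` give those on `Φ`.
-/

open MeasureTheory Set intervalIntegral
open scoped Interval

section Piecewise

variable {E : Type*} {f g : ℝ → E} {a m b : ℝ}

theorem eqOn_ite_le_left (ham : a ≤ m) :
    EqOn (fun t => if t ≤ m then f t else g t) f (Ι a m) := fun t ht => by
  rw [uIoc_of_le ham] at ht
  exact if_pos ht.2

theorem eqOn_ite_le_right (hmb : m ≤ b) :
    EqOn (fun t => if t ≤ m then f t else g t) g (Ι m b) := fun t ht => by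
  rw [uIoc_of_le hmb] at ht
  exact if_neg ht.1.not_ge

variable [NormedAddCommGroup E] {μ : Measure ℝ}

theorem IntervalIntegrable.ite_le (ham : a ≤ m) (hmb : m ≤ b) (hf : IntervalIntegrable f μ a m)
    (hg : IntervalIntegrable g μ m b) :
    IntervalIntegrable (fun t => if t ≤ m then f t else g t) μ a b :=
  ((intervalIntegrable_congr (eqOn_ite_le_left ham)).2 hf).trans
    ((intervalIntegrable_congr (eqOn_ite_le_right hmb)).2 hg)

theorem intervalIntegral.integral_ite_le [NormedSpace ℝ E] (ham : a ≤ m) (hmb : m ≤ b)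
    (hf : IntervalIntegrable f μ a m) (hg : IntervalIntegrable g μ m b) :
    ∫ t in a..b, (if t ≤ m then f t else g t) ∂μ =
      (∫ t in a..m, f t ∂μ) + ∫ t in m..b, g t ∂μ := by
  rw [← integral_add_adjacent_intervals
      ((intervalIntegrable_congr (eqOn_ite_le_left ham)).2 hf)
      ((intervalIntegrable_congr (eqOn_ite_le_right hmb)).2 hg),
    integral_congr_ae (.of_forall fun t ht => eqOn_ite_le_left (g := g) ham ht),
    integral_congr_ae (.of_forall fun t ht => eqOn_ite_le_right (f := f) hmb ht)]

variable [IsLocallyFiniteMeasure μ] {f₁ f₂ f₃ f₄ : ℝ → E} {x₀ x₁ x₂ x₃ x₄ : ℝ}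

theorem intervalIntegrable_ite_le₃ (h₁ : x₀ ≤ x₁) (h₂ : x₁ ≤ x₂) (h₃ : x₂ ≤ x₃) (h₄ : x₃ ≤ x₄)
    (hf₁ : Continuous f₁ := by fun_prop) (hf₂ : Continuous f₂ := by fun_prop)
    (hf₃ : Continuous f₃ := by fun_prop) (hf₄ : Continuous f₄ := by fun_prop) :
    IntervalIntegrable (fun t => if t ≤ x₁ then f₁ t else if t ≤ x₂ then f₂ t
      else if t ≤ x₃ then f₃ t else f₄ t) μ x₀ x₄ :=
  (hf₁.intervalIntegrable _ _).ite_le h₁ (h₂.trans (h₃.trans h₄)) <|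
    (hf₂.intervalIntegrable _ _).ite_le h₂ (h₃.trans h₄) <|
      (hf₃.intervalIntegrable _ _).ite_le h₃ h₄ (hf₄.intervalIntegrable _ _)

theorem intervalIntegral.integral_ite_le₃ [NormedSpace ℝ E] (h₁ : x₀ ≤ x₁) (h₂ : x₁ ≤ x₂)
    (h₃ : x₂ ≤ x₃) (h₄ : x₃ ≤ x₄)
    (hf₁ : Continuous f₁ := by fun_prop) (hf₂ : Continuous f₂ := by fun_prop)
    (hf₃ : Continuous f₃ := by fun_prop) (hf₄ : Continuous f₄ := by fun_prop) :
    ∫ t in x₀..x₄, (if t ≤ x₁ then f₁ t else if t ≤ x₂ then f₂ t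
      else if t ≤ x₃ then f₃ t else f₄ t) ∂μ =
      (∫ t in x₀..x₁, f₁ t ∂μ) + (∫ t in x₁..x₂, f₂ t ∂μ) + (∫ t in x₂..x₃, f₃ t ∂μ) +
        ∫ t in x₃..x₄, f₄ t ∂μ := by
  have hi {f : ℝ → E} (hf : Continuous f) (a b : ℝ) := hf.intervalIntegrable (μ := μ) a b
  rw [integral_ite_le h₁ (h₂.trans (h₃.trans h₄)) (hi hf₁ _ _)
      ((hi hf₂ _ _).ite_le h₂ (h₃.trans h₄) ((hi hf₃ _ _).ite_le h₃ h₄ (hi hf₄ _ _))),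
    integral_ite_le h₂ (h₃.trans h₄) (hi hf₂ _ _) ((hi hf₃ _ _).ite_le h₃ h₄ (hi hf₄ _ _)),
    integral_ite_le h₃ h₄ (hi hf₃ _ _) (hi hf₄ _ _), add_assoc, add_assoc]

end Piecewise

theorem integral_quadratic (α β γ a b : ℝ) :
    ∫ t in a..b, (α * t ^ 2 + β * t + γ) =
      α * (b ^ 3 - a ^ 3) / 3 + β * (b ^ 2 - a ^ 2) / 2 + γ * (b - a) := by
  have hi {f : ℝ → ℝ} (hf : Continuous f) := hf.intervalIntegrable (μ := volume) a b
  rw [intervalIntegral.integral_add (hi (by fun_prop)) (hi (by fun_prop)),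
    intervalIntegral.integral_add (hi (by fun_prop)) (hi (by fun_prop)),
    intervalIntegral.integral_const_mul,
    intervalIntegral.integral_const_mul, integral_pow, integral_id,
    intervalIntegral.integral_const, smul_eq_mul]
  push_cast
  ring

theorem eq_quadratic_of_root {p c : ℝ} (hroot : 401 * p ^ 3 - 331 * p ^ 2 + 19 * p + 7 = 0)
    (hD : 71 * p ^ 2 - 66 * p + 11 ≠ 0)
    (hc : c = (187 * p ^ 3 - 211 * p ^ 2 + 61 * p - 5) / (2 * (71 * p ^ 2 - 66 * p + 11))) :
    c = (5 + 256 * p - 401 * p ^ 2) / 76 := by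
  rw [hc, div_eq_div_iff (mul_ne_zero two_ne_zero hD) (by norm_num)]
  linear_combination (142 * p - 70) * hroot

theorem integral_certificate {p c d e f g K r s l q n1 nu n2 : ℝ} {A B : ℝ → ℝ}
    (h0p : 0 ≤ p) (hpc : p ≤ c) (hcd : c ≤ d) (hd1 : d ≤ 1)
    (h0e : 0 ≤ e) (hef : e ≤ f) (hfg : f ≤ g) (hg1 : g ≤ 1)
    (hA : ∀ t : ℝ, A t = if t ≤ p then 0
      else if t ≤ c then -K * t ^ 2 - 2 * r * t + n1
      else if t ≤ d then l * t + nu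
      else -K * t ^ 2 + 2 * K * t + n2)
    (hB : ∀ t : ℝ, B t = if t ≤ e then K / 2 * t ^ 2 + r * t + s
      else if t ≤ f then -l * t + q
      else if t ≤ g then K / 2 * t ^ 2 + r * t + s
      else 0) :
    ∫ t in (0 : ℝ)..1, (A t + B t) =
      (-K * (c ^ 3 - p ^ 3) / 3 - r * (c ^ 2 - p ^ 2) + n1 * (c - p))
        + (l * (d ^ 2 - c ^ 2) / 2 + nu * (d - c))
        + (-K * (1 - d ^ 3) / 3 + K * (1 - d ^ 2) + n2 * (1 - d))
        + (K * e ^ 3 / 6 + r * e ^ 2 / 2 + s * e)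
        + (-l * (f ^ 2 - e ^ 2) / 2 + q * (f - e))
        + (K * (g ^ 3 - f ^ 3) / 6 + r * (g ^ 2 - f ^ 2) / 2 + s * (g - f)) := by
  have hA' : A = fun t => if t ≤ p then 0 * t ^ 2 + 0 * t + 0
      else if t ≤ c then -K * t ^ 2 + -(2 * r) * t + n1
      else if t ≤ d then 0 * t ^ 2 + l * t + nu
      else -K * t ^ 2 + 2 * K * t + n2 := by
    funext t; rw [hA]; split_ifs <;> ring
  have hB' : B = fun t => if t ≤ e then K / 2 * t ^ 2 + r * t + s
      else if t ≤ f then 0 * t ^ 2 + -l * t + q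
      else if t ≤ g then K / 2 * t ^ 2 + r * t + s
      else 0 * t ^ 2 + 0 * t + 0 := by
    funext t; rw [hB]; split_ifs <;> ring
  rw [intervalIntegral.integral_add (hA' ▸ intervalIntegrable_ite_le₃ h0p hpc hcd hd1)
      (hB' ▸ intervalIntegrable_ite_le₃ h0e hef hfg hg1),
    hA', hB', integral_ite_le₃ h0p hpc hcd hd1, integral_ite_le₃ h0e hef hfg hg1]
  simp only [integral_quadratic]
  ring

set_option maxHeartbeats 400000 in
/-- With `p` the specified cubic root and the certificate functions `A` and `B` as in
the odd-fat continuum certificate, the objective value `Φ = 4∫₀¹ (A(t) + B(t)) dt`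
satisfies `401Φ³ − 1744Φ² + 2240Φ − 768 = 0` and `157/100 < Φ < 158/100`. -/
theorem certificate_objective_value (p c d e f g CC DD EE HH K r s l q n1 nu n2 : ℝ)
    (hproot : 401 * p ^ 3 - 331 * p ^ 2 + 19 * p + 7 = 0)
    (hpmem : p ∈ Set.Ioo (2115883 / 10 ^ 7 : ℝ) (2115884 / 10 ^ 7))
    (hc : c = (187 * p ^ 3 - 211 * p ^ 2 + 61 * p - 5) / (2 * (71 * p ^ 2 - 66 * p + 11)))
    (hd : d = 1 + p - c)
    (he : e = (2 * c + 3 * p - 1) / 4)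
    (hf : f = (-2 * c + 5 * p + 1) / 4)
    (hg : g = (1 - 3 * p + 2 * c) / 2)
    (hCC : CC = -c ^ 2 + c * e / 2 + c * f / 2 + d ^ 2 - d * e / 2 - d * f / 2
      - 2 * d - g ^ 2 + 2 * p ^ 2 + 1)
    (hDD : DD = -c - d - 2 * g + 4 * p)
    (hEE : EE = -2 * c ^ 2 + c * e + c * f - e * f / 2 - e / 2 - f / 2
      - g ^ 2 / 2 + 2 * p ^ 2)
    (hHH : HH = -2 * c - g + 4 * p - 1)
    (hK1 : K * CC + r * DD = 1)
    (hK2 : K * EE + r * HH = 1)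
    (hs : s = -(K / 2) * g ^ 2 - r * g)
    (hl : l = -((K / 2) * (e + f) + r))
    (hq : q = -(K / 2) * (e * f) - (K / 2) * g ^ 2 - r * g)
    (hn1 : n1 = K * p ^ 2 + 2 * r * p)
    (hnu : nu = (-2 * K * c ^ 2 + K * c * e + K * c * f + 2 * K * p ^ 2
      - 2 * c * r + 4 * p * r) / 2)
    (hn2 : n2 = (-2 * K * c ^ 2 + K * c * e + K * c * f + 2 * K * d ^ 2
      - K * d * e - K * d * f - 4 * K * d + 2 * K * p ^ 2
      - 2 * c * r - 2 * d * r + 4 * p * r) / 2)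
    (A B : ℝ → ℝ)
    (hA : ∀ t : ℝ, A t = if t ≤ p then 0
      else if t ≤ c then -K * t ^ 2 - 2 * r * t + n1
      else if t ≤ d then l * t + nu
      else -K * t ^ 2 + 2 * K * t + n2)
    (hB : ∀ t : ℝ, B t = if t ≤ e then K / 2 * t ^ 2 + r * t + s
      else if t ≤ f then -l * t + q
      else if t ≤ g then K / 2 * t ^ 2 + r * t + s
      else 0)
    (Phi : ℝ)
    (hPhi : Phi = 4 * ∫ t in (0 : ℝ)..1, (A t + B t)) :
    401 * Phi ^ 3 - 1744 * Phi ^ 2 + 2240 * Phi - 768 = 0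
    ∧ 157 / 100 < Phi ∧ Phi < 158 / 100 := by
  obtain ⟨hp₀, hp₁⟩ := hpmem
  have hc' : c = (5 + 256 * p - 401 * p ^ 2) / 76 := eq_quadratic_of_root hproot
    (by nlinarith [sq_nonneg (p - 2115883 / 10 ^ 7)] : (0 : ℝ) < 71 * p ^ 2 - 66 * p + 11).ne' hc
  have hc₀ : 1 / 2 < c := by rw [hc']; nlinarith [mul_pos (sub_pos.2 hp₀) (sub_pos.2 hp₁)]
  have hc₁ : c < 14 / 25 := by rw [hc']; nlinarith [sq_nonneg (p - 2115883 / 10 ^ 7)]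
  have hPhi' : Phi = 2 - 2 * p := by
    rw [hPhi, integral_certificate (by linarith) (by linarith) (by linarith) (by linarith)
      (by linarith) (by linarith) (by linarith) (by linarith) hA hB]
    subst hc' hd he hf hg hCC hDD hEE hHH hs hl hq hn1 hnu hn2
    -- the `hproot` coefficient is the quotient by the cubic of what remains once `c` is substituted
    linear_combination (4 * ((5 + 256 * p - 401 * p ^ 2) / 76 - p)) * hK1
      + (2 * (1 + p - 2 * ((5 + 256 * p - 401 * p ^ 2) / 76))) * hK2
      + (K * (40013 + 405865 * p - 1790465 * p ^ 2 + 1768811 * p ^ 3) / 2633856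
        + r * (257 - 401 * p) / 2888) * hproot
  refine ⟨?_, ?_, ?_⟩
  · rw [hPhi']; linear_combination -8 * hproot
  all_goals rw [hPhi']; linarith
end

section
/- If real numbers p and c satisfy the two equations −4c² − 4cp + 4c + 13p² − 10p + 1 = 0 and 88c³ − 36c²p − 36c² − 126cp² + 132cp − 30c + 29p³ − 57p² + 39p − 3 = 0, then (p − 1)²(5p − 1)(401p³ − 331p² + 19p + 7) = 0. -/
/-- If real numbers `p` and `c` satisfy the two stationarity equations of the
active-patch Lagrangian for the odd-fat continuum certificate, then `p` satisfies the
eliminant `(p − 1)²(5p − 1)(401p³ − 331p² + 19p + 7) = 0`. -/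
theorem stationarity_eliminant (p c : ℝ)
    (h1 : -4 * c ^ 2 - 4 * c * p + 4 * c + 13 * p ^ 2 - 10 * p + 1 = 0)
    (h2 : 88 * c ^ 3 - 36 * c ^ 2 * p - 36 * c ^ 2 - 126 * c * p ^ 2 + 132 * c * p
      - 30 * c + 29 * p ^ 3 - 57 * p ^ 2 + 39 * p - 3 = 0) :
    (p - 1) ^ 2 * (5 * p - 1) * (401 * p ^ 3 - 331 * p ^ 2 + 19 * p + 7) = 0 := by
  linear_combination
    ((-109/4 : ℝ) + 182*p - (567/2)*p^2 + 142*p^3 - (117/4)*p^4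
      - 77*c + 583*c*p - 1183*c*p^2 + 709*c*p^3
      + 121*c^2 - 726*c^2*p + 781*c^2*p^2) * h1
    + ((-27/4 : ℝ) + (215/4)*p - (485/4)*p^2 + (329/4)*p^3
      + (11/2)*c - 33*c*p + (71/2)*c*p^2) * h2
end
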